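/- Set e_1 = x_1 and e_j = 2x_j − x_1 in S_n for 2 ≤ j ≤ n. For every permutation σ of {1,…,n} and every function ε : {1,…,n} → {1,−1}, there exists a unique graded ring automorphism φ of S_n satisfying φ(e_i) = ε(i)·e_{σ(i)} for all i = 1,…,n. -/

import Mathlib

/-!
Indices start at `0`, so `x 0` is the paper's `x_1`. In `S_n` every `e_k = 2x_k − x_0` squares to
zero, and `2x_i = e_i + e_0`. So the automorphism must send `x_i` to
`y_i = (ε_i e_{σ i} + ε_0 e_{σ 0}) / 2`, which lies in `H²` because the `ε_i` are odd; the `y_i`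
satisfy the defining relations by a ring identity that only uses `x_0² = 0` and
`x_k² = x_0 x_k`, so this defines a ring endomorphism. `H²` is free on the `x_i`, hence has no
`2`-torsion, so an endomorphism preserving `H²` is determined by the images of the `2x_i`, i.e. of
the `e_i`. This gives uniqueness, and shows that the endomorphism for `(σ⁻¹, ε ∘ σ⁻¹)` is inverse
to the one for `(σ, ε)` since `ε_i² = 1`.
-/

open MvPolynomial

noncomputable section

/-- The defining relations x_1², x_j² − x_1 x_j (j ≥ 2) of S_n. -/
def srel (n : ℕ) (j : Fin n) : MvPolynomial (Fin n) ℤ :=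
  X j ^ 2 -
    (if j.val = 0 then 0
      else X (⟨0, Nat.lt_of_le_of_lt (Nat.zero_le _) j.isLt⟩ : Fin n)) * X j

/-- S_n = ℤ[x_1,…,x_n]/(x_1², x_j² − x_1 x_j : j = 2,…,n). -/
abbrev SRing (n : ℕ) : Type :=
  MvPolynomial (Fin n) ℤ ⧸ Ideal.span (Set.range (srel n))

/-- The image x_i of X i in S_n. -/
def sx (n : ℕ) (i : Fin n) : SRing n :=
  Ideal.Quotient.mk _ (X i)

/-- e_1 = x_1 and e_j = 2x_j − x_1 for j ≥ 2. -/
def se (n : ℕ) [NeZero n] (i : Fin n) : SRing n :=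
  if i = 0 then sx n 0 else 2 • sx n i - sx n 0

lemma sq_eq_mul_of_two_mul_eq {R : Type*} [CommRing R] {x₀ a b u v c : R} (h₀ : x₀ ^ 2 = 0)
    (ha : a ^ 2 = x₀ * a) (hb : b ^ 2 = x₀ * b) (hc : 2 * c = u + v) :
    (u * a + v * b - c * x₀) ^ 2 = v * (2 * b - x₀) * (u * a + v * b - c * x₀) := by
  linear_combination u ^ 2 * ha - v ^ 2 * hb + c * (c - v) * h₀ - u * a * x₀ * hc

namespace SRing

variable {n : ℕ}

def lift [NeZero n] {R : Type*} [CommRing R] (y : Fin n → R) (h₀ : y 0 ^ 2 = 0)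
    (h : ∀ k, y k ^ 2 = y 0 * y k) : SRing n →+* R :=
  Ideal.Quotient.lift _ (eval₂Hom (Int.castRingHom R) y) fun p hp => by
    refine RingHom.mem_ker.mp (Ideal.span_le.mpr ?_ hp)
    rintro _ ⟨j, rfl⟩
    rcases eq_or_ne j 0 with rfl | hj
    · simp [srel, h₀]
    · simp [srel, hj, h]

@[simp]
lemma lift_sx [NeZero n] {R : Type*} [CommRing R] (y : Fin n → R) (h₀ : y 0 ^ 2 = 0)
    (h : ∀ k, y k ^ 2 = y 0 * y k) (i : Fin n) : lift y h₀ h (sx n i) = y i := by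
  simp [lift, sx]

lemma ringHom_ext {R : Type*} [Semiring R] {f g : SRing n →+* R}
    (h : ∀ i, f (sx n i) = g (sx n i)) : f = g :=
  Ideal.Quotient.ringHom_ext (MvPolynomial.ringHom_ext' (RingHom.ext_int _ _) h)

lemma mk_srel (k : Fin n) : (Ideal.Quotient.mk _ (srel n k) : SRing n) = 0 :=
  Ideal.Quotient.eq_zero_iff_mem.mpr (Ideal.subset_span ⟨k, rfl⟩)

abbrev H2 (n : ℕ) : Submodule ℤ (SRing n) := Submodule.span ℤ (Set.range (sx n))

lemma mapsTo_H2 {f : SRing n →+* SRing n} (hf : ∀ i, f (sx n i) ∈ H2 n) :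
    Set.MapsTo f (H2 n) (H2 n) := fun _ hz =>
  (Submodule.span_le (p := (H2 n).comap f.toAddMonoidHom.toIntLinearMap)).mpr
    (Set.range_subset_iff.mpr hf) hz

variable [NeZero n]

lemma sx_zero_sq : sx n 0 ^ 2 = 0 := by
  simpa [srel, sx] using mk_srel (0 : Fin n)

lemma sx_sq (k : Fin n) : sx n k ^ 2 = sx n 0 * sx n k := by
  rcases eq_or_ne k 0 with rfl | hk
  · exact sq _
  · simpa [srel, sx, hk, sub_eq_zero] using mk_srel k

lemma se_eq (k : Fin n) : se n k = 2 • sx n k - sx n 0 := by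
  rcases eq_or_ne k 0 with rfl | hk
  · rw [se, if_pos rfl, two_nsmul, add_sub_cancel_right]
  · rw [se, if_neg hk]

lemma se_sq (k : Fin n) : se n k ^ 2 = 0 := by
  have h₀ := sx_zero_sq (n := n)
  have hk := sx_sq k
  rw [se_eq, nsmul_eq_mul] at *
  linear_combination 4 * hk + h₀

lemma two_nsmul_sx (k : Fin n) : 2 • sx n k = se n k + se n 0 := by
  rw [se_eq, se_eq]
  abel

/-- Killing all products, `x_i ↦ (0, Pi.single i 1)` reads off the coefficients of elements of
`H2 n`. -/
def coords : SRing n →+* TrivSqZeroExt ℤ (Fin n → ℤ) :=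
  lift (fun i => TrivSqZeroExt.inr (Pi.single i 1)) (by simp [sq]) (by simp [sq])

lemma eq_sum_coords_smul_sx {z : SRing n} (hz : z ∈ H2 n) :
    z = ∑ i, (coords z).snd i • sx n i := by
  obtain ⟨c, rfl⟩ := (Submodule.mem_span_range_iff_exists_fun ℤ).mp hz
  have hc : (coords (∑ i, c i • sx n i)).snd = c := by
    simp only [coords, map_sum, map_zsmul, lift_sx, TrivSqZeroExt.snd_sum,
      TrivSqZeroExt.snd_smul, TrivSqZeroExt.snd_inr]
    ext i
    simp [Pi.single_apply]
  rw [hc]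

lemma eq_of_two_nsmul_eq {z w : SRing n} (hz : z ∈ H2 n) (hw : w ∈ H2 n) (h : 2 • z = 2 • w) :
    z = w := by
  have hc : (coords z).snd = (coords w).snd := by
    refine nsmul_right_injective two_ne_zero ?_
    simpa only [map_nsmul, TrivSqZeroExt.snd_smul] using congrArg (fun t => (coords t).snd) h
  rw [eq_sum_coords_smul_sx hz, eq_sum_coords_smul_sx hw, hc]

lemma ringHom_ext_of_se {f g : SRing n →+* SRing n} (hf : Set.MapsTo f (H2 n) (H2 n))
    (hg : Set.MapsTo g (H2 n) (H2 n)) (h : ∀ i, f (se n i) = g (se n i)) : f = g := by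
  refine ringHom_ext fun i => ?_
  have hx : sx n i ∈ H2 n := Submodule.subset_span ⟨i, rfl⟩
  refine eq_of_two_nsmul_eq (hf hx) (hg hx) ?_
  rw [← map_nsmul, ← map_nsmul, two_nsmul_sx, map_add, map_add, h, h]

section signedMap

variable (τ : Fin n → Fin n) (ε : Fin n → ℤ)

/-- `(ε i • e_{τ i} + ε 0 • e_{τ 0}) / 2` written out in the `x`'s: the image of `x_i` under the
endomorphism with `e_i ↦ ε i • e_{τ i}`, since `2 • x_i = e_i + e_0`. -/
def signedImage (i : Fin n) : SRing n :=
  ε i • sx n (τ i) + ε 0 • sx n (τ 0) - ((ε i + ε 0) / 2) • sx n 0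

lemma signedImage_zero : signedImage τ ε 0 = ε 0 • se n (τ 0) := by
  have hc : (ε 0 + ε 0) / 2 = ε 0 := by omega
  rw [signedImage, hc, se_eq, smul_sub, smul_comm, two_nsmul]

lemma signedImage_mem (i : Fin n) : signedImage τ ε i ∈ H2 n := by
  have hx : ∀ k, sx n k ∈ H2 n := fun k => Submodule.subset_span ⟨k, rfl⟩
  exact sub_mem (add_mem (Submodule.smul_mem _ _ (hx _)) (Submodule.smul_mem _ _ (hx _)))
    (Submodule.smul_mem _ _ (hx _))

variable {ε} (hε : ∀ i, Odd (ε i))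
include hε

lemma two_mul_half_add (i : Fin n) : 2 * ((ε i + ε 0) / 2) = ε i + ε 0 :=
  Int.two_mul_ediv_two_of_even ((hε i).add_odd (hε 0))

lemma signedImage_sq (k : Fin n) :
    signedImage τ ε k ^ 2 = signedImage τ ε 0 * signedImage τ ε k := by
  have hc := congrArg (Int.cast : ℤ → SRing n) (two_mul_half_add hε k)
  push_cast at hc
  rw [signedImage_zero, se_eq, signedImage]
  simp only [zsmul_eq_mul, nsmul_eq_mul, Nat.cast_ofNat]
  exact sq_eq_mul_of_two_mul_eq sx_zero_sq (sx_sq _) (sx_sq _) hc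

def signedMap : SRing n →+* SRing n :=
  lift (signedImage τ ε)
    (by rw [signedImage_zero, smul_pow, se_sq, smul_zero])
    (signedImage_sq τ hε)

lemma signedMap_se (i : Fin n) : signedMap τ hε (se n i) = ε i • se n (τ i) := by
  have hc := congrArg (Int.cast : ℤ → SRing n) (two_mul_half_add hε i)
  push_cast at hc
  rw [se_eq i, map_sub, map_nsmul, signedMap, lift_sx, lift_sx, signedImage_zero, signedImage,
    se_eq, se_eq]
  simp only [zsmul_eq_mul, nsmul_eq_mul, Nat.cast_ofNat]
  linear_combination (-sx n 0) * hc

lemma mapsTo_signedMap : Set.MapsTo (signedMap τ hε) (H2 n) (H2 n) :=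
  mapsTo_H2 fun i => by rw [signedMap, lift_sx]; exact signedImage_mem τ ε i

end signedMap

lemma signedMap_comp_eq_id {τ τ' : Fin n → Fin n} {ε ε' : Fin n → ℤ} (hε : ∀ i, Odd (ε i))
    (hε' : ∀ i, Odd (ε' i)) (hτ : ∀ i, τ' (τ i) = i) (hεε' : ∀ i, ε i * ε' (τ i) = 1) :
    (signedMap τ' hε').comp (signedMap τ hε) = RingHom.id _ :=
  ringHom_ext_of_se ((mapsTo_signedMap τ' hε').comp (mapsTo_signedMap τ hε)) (Set.mapsTo_id _)
    fun i => by
      simp only [RingHom.comp_apply, signedMap_se, map_zsmul, smul_smul, hτ, hεε', one_smul,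
        RingHom.id_apply]

end SRing

open SRing

theorem exists_unique_graded_automorphism (n : ℕ) [NeZero n]
    (σ : Equiv.Perm (Fin n)) (ε : Fin n → ℤ) (hε : ∀ i, ε i = 1 ∨ ε i = -1) :
    ∃! φ : SRing n ≃+* SRing n,
      φ '' (Submodule.span ℤ (Set.range (sx n)) : Set (SRing n))
          = (Submodule.span ℤ (Set.range (sx n)) : Set (SRing n)) ∧
      ∀ i, φ (se n i) = ε i • se n (σ i) := by
  have hodd : ∀ i, Odd (ε i) := fun i => by rcases hε i with h | h <;> simp [h]
  have hsq : ∀ i, ε i * ε i = 1 := fun i => by rcases hε i with h | h <;> simp [h]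
  have hodd' : ∀ i, Odd ((ε ∘ σ.symm) i) := fun i => hodd _
  have hψφ := signedMap_comp_eq_id hodd hodd' σ.symm_apply_apply (by simp [hsq])
  have hφψ := signedMap_comp_eq_id hodd' hodd σ.apply_symm_apply (by simp [hsq])
  refine ⟨RingEquiv.ofRingHom _ _ hφψ hψφ, ⟨?_, signedMap_se σ hodd⟩, ?_⟩
  · refine (mapsTo_signedMap σ hodd).image_subset.antisymm fun z hz => ?_
    exact ⟨_, mapsTo_signedMap _ hodd' hz, RingHom.congr_fun hφψ z⟩
  · rintro Φ ⟨hΦ, hΦe⟩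
    have hΦφ := ringHom_ext_of_se (f := Φ.toRingHom) (Set.mapsTo_iff_image_subset.mpr hΦ.subset)
      (mapsTo_signedMap σ hodd) fun i => (hΦe i).trans (signedMap_se σ hodd i).symm
    exact RingEquiv.ext (RingHom.congr_fun hΦφ)

end
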